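/- arXiv:2404.04389 — 3 statements merged into one kernel-verified Lean document; each statement's English description precedes it below -/
import Mathlib

section
/- Define A(1)=7 and A(r+1) = A(r) + 4·B(r) + 3·Y(r), where B(1)=7, Y(1)=0, B(r+1)=2B(r)+Y(r), Y(r+1)=B(r)+Y(r). Then for all r ≥ 2, A(r) = 7·(4·F(2r-2) + 3·F(2r-3) - 2). -/
theorem area_fib (A B Y : ℕ → ℕ)
    (hB1 : B 1 = 7) (hY1 : Y 1 = 0)
    (hB : ∀ r ≥ 1, B (r + 1) = 2 * B r + Y r)
    (hY : ∀ r ≥ 1, Y (r + 1) = B r + Y r)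
    (hA1 : A 1 = 7)
    (hA : ∀ r ≥ 1, A (r + 1) = A r + 4 * B r + 3 * Y r) :
    ∀ r ≥ 2, A r = 7 * (4 * Nat.fib (2 * r - 2) + 3 * Nat.fib (2 * r - 3) - 2) := by
  have hBY : ∀ r ≥ 1, B r = 7 * Nat.fib (2 * r - 1) ∧ Y r = 7 * Nat.fib (2 * r - 2) := by
    intro r hr
    induction r, hr using Nat.le_induction with
    | base => simp [hB1, hY1]
    | succ n hn ih =>
      obtain ⟨ihB, ihY⟩ := ih
      obtain ⟨m, rfl⟩ : ∃ m, n = m + 1 := ⟨n - 1, by omega⟩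
      have e1 : 2 * (m + 1) - 1 = 2 * m + 1 := by omega
      have e2 : 2 * (m + 1) - 2 = 2 * m := by omega
      have e3 : 2 * (m + 1 + 1) - 1 = 2 * m + 2 + 1 := by omega
      have e4 : 2 * (m + 1 + 1) - 2 = 2 * m + 2 := by omega
      rw [e1] at ihB
      rw [e2] at ihY
      constructor
      · rw [hB _ hn, ihB, ihY, e3, Nat.fib_add_two, Nat.fib_add_two]
        ring
      · rw [hY _ hn, ihB, ihY, e4, Nat.fib_add_two]
        ring
  intro r hr
  induction r, hr using Nat.le_induction with
  | base =>
    have h := hA 1 le_rfl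
    rw [hA1, hB1, hY1] at h
    simpa using h
  | succ n hn ih =>
    obtain ⟨hBn, hYn⟩ := hBY n (by omega)
    obtain ⟨m, rfl⟩ : ∃ m, n = m + 2 := ⟨n - 2, by omega⟩
    have e1 : 2 * (m + 2) - 1 = 2 * m + 2 + 1 := by omega
    have e2 : 2 * (m + 2) - 2 = 2 * m + 2 := by omega
    have e3 : 2 * (m + 2) - 3 = 2 * m + 1 := by omega
    have e4 : 2 * (m + 2 + 1) - 2 = 2 * m + 2 + 2 := by omega
    have e5 : 2 * (m + 2 + 1) - 3 = 2 * m + 2 + 1 := by omega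
    rw [hA _ (by omega), ih, hBn, hYn, e1, e2, e3, e4, e5,
      Nat.fib_add_two (n := 2 * m + 2), Nat.fib_add_two (n := 2 * m + 1),
      Nat.fib_add_two (n := 2 * m)]
    have hf : 1 ≤ Nat.fib (2 * m + 1) := Nat.fib_pos.mpr (by omega)
    omega
end

section
/- The sequence r ↦ (4·F(2r-2) + 3·F(2r-3) - 2) / F(2r) of real numbers converges to √5 as r → ∞. -/
/-!
The numerator is a Lucas number minus two: `4 F(2r-2) + 3 F(2r-3) = F(2r+1) + F(2r-1) = L(2r)`.
Since `L(n) = φⁿ + ψⁿ = √5 F(n) + 2ψⁿ` with `|ψ| < 1`, the ratio equals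
`√5 + (2ψ^(2r) - 2) / F(2r)`, and the error term vanishes because `F(2r) → ∞`.
-/

open Filter Topology Real goldenRatio

theorem Nat.fib_add_four_add_fib_add_two (m : ℕ) :
    fib (m + 4) + fib (m + 2) = 4 * fib (m + 1) + 3 * fib m := by
  simp only [fib_add_two]
  ring

theorem Nat.tendsto_fib_atTop : Tendsto fib atTop atTop :=
  tendsto_atTop_mono' atTop (eventually_ge_atTop 5 |>.mono fun _ => le_fib_self) tendsto_id

/-- `fib (n + 2) + fib n` is the Lucas number `φ ^ (n + 1) + ψ ^ (n + 1)`. -/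
theorem Real.coe_fib_add_two_add_fib (n : ℕ) :
    (Nat.fib (n + 2) + Nat.fib n : ℝ) = √5 * Nat.fib (n + 1) + 2 * ψ ^ (n + 1) := by
  have h := goldenConj_mul_fib_succ_add_fib n
  rw [goldenConj] at h
  rw [Nat.fib_add_two, Nat.cast_add]
  linear_combination 2 * h

theorem Real.tendsto_fib_add_two_add_fib_sub_div_fib_succ (c : ℝ) :
    Tendsto (fun n : ℕ => ((Nat.fib (n + 2) + Nat.fib n : ℝ) - c) / Nat.fib (n + 1))
      atTop (𝓝 √5) := by
  have hψ : Tendsto (fun n : ℕ => ψ ^ (n + 1)) atTop (𝓝 0) :=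
    (tendsto_pow_atTop_nhds_zero_of_abs_lt_one <| abs_lt.2
      ⟨neg_one_lt_goldenConj, goldenConj_neg.trans one_pos⟩).comp (tendsto_add_atTop_nat 1)
  have hinv : Tendsto (fun n : ℕ => (Nat.fib (n + 1) : ℝ)⁻¹) atTop (𝓝 0) :=
    (tendsto_natCast_atTop_atTop.comp <|
      Nat.tendsto_fib_atTop.comp (tendsto_add_atTop_nat 1)).inv_tendsto_atTop
  have hlim := ((hψ.const_mul 2).sub_const c |>.mul hinv).const_add √5
  rw [mul_zero, add_zero] at hlim
  refine hlim.congr fun n => ?_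
  have hfib : (Nat.fib (n + 1) : ℝ) ≠ 0 := by exact_mod_cast (Nat.fib_pos.2 n.succ_pos).ne'
  rw [coe_fib_add_two_add_fib]
  field_simp
  ring

theorem area_perimeter_ratio_tendsto :
    Filter.Tendsto (fun r : ℕ =>
      ((4 * Nat.fib (2 * r - 2) + 3 * Nat.fib (2 * r - 3) : ℝ) - 2) / Nat.fib (2 * r))
      Filter.atTop (nhds (Real.sqrt 5)) := by
  rw [← tendsto_add_atTop_iff_nat 2]
  have hidx : Tendsto (fun s : ℕ => 2 * s + 3) atTop atTop :=
    tendsto_atTop_mono (fun s => show s ≤ 2 * s + 3 by omega) tendsto_id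
  refine (tendsto_fib_add_two_add_fib_sub_div_fib_succ 2 |>.comp hidx).congr fun s => ?_
  have hnum : Nat.fib (2 * s + 3 + 2) + Nat.fib (2 * s + 3) =
      4 * Nat.fib (2 * s + 2) + 3 * Nat.fib (2 * s + 1) :=
    Nat.fib_add_four_add_fib_add_two (2 * s + 1)
  rw [Function.comp_apply, show 2 * (s + 2) - 2 = 2 * s + 2 by omega,
    show 2 * (s + 2) - 3 = 2 * s + 1 by omega, show 2 * (s + 2) = 2 * s + 3 + 1 by omega,
    ← Nat.cast_add, hnum]
  push_cast
  rfl
end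

section
/- The sequence A(r)/P(r), where A(r) = 7·(4·F(2r-2)+3·F(2r-3)-2) and P(r) = 7·F(2r), is bounded above by 7 for all r ≥ 2. -/
theorem ratio_bounded : ∀ r : ℕ, r ≥ 2 →
    (7 * (4 * Nat.fib (2 * r - 2) + 3 * Nat.fib (2 * r - 3) - 2) : ℝ) /
      (7 * Nat.fib (2 * r)) ≤ 7 := by
  intro r hr
  obtain ⟨s, rfl⟩ : ∃ s, r = s + 2 := ⟨r - 2, by omega⟩
  have h1 : 2 * (s + 2) - 2 = 2 * s + 2 := by omega
  have h2 : 2 * (s + 2) - 3 = 2 * s + 1 := by omega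
  have h3 : 2 * (s + 2) = 2 * s + 4 := by omega
  rw [h1, h2, h3]
  have hfibpos : 0 < Nat.fib (2 * s + 4) := Nat.fib_pos.mpr (by omega)
  have hpos : (0 : ℝ) < 7 * Nat.fib (2 * s + 4) := by
    have : (0 : ℝ) < Nat.fib (2 * s + 4) := by exact_mod_cast hfibpos
    linarith
  rw [div_le_iff₀ hpos]
  have key : 4 * Nat.fib (2 * s + 2) + 3 * Nat.fib (2 * s + 1)
      ≤ 7 * Nat.fib (2 * s + 4) := by
    have e4 : Nat.fib (2 * s + 2 + 2) = Nat.fib (2 * s + 2) + Nat.fib (2 * s + 2 + 1) :=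
      Nat.fib_add_two
    have e3 : Nat.fib (2 * s + 1 + 2) = Nat.fib (2 * s + 1) + Nat.fib (2 * s + 1 + 1) :=
      Nat.fib_add_two
    have h43 : 2 * s + 2 + 2 = 2 * s + 4 := by omega
    have h33 : 2 * s + 1 + 2 = 2 * s + 3 := by omega
    simp only [show 2*s+2+1=2*s+3 from by omega, show 2*s+1+1=2*s+2 from by omega] at e4 e3
    rw [h43] at e4
    rw [h33] at e3
    omega
  have key' : (4 * Nat.fib (2 * s + 2) + 3 * Nat.fib (2 * s + 1) : ℝ)
      ≤ 7 * Nat.fib (2 * s + 4) := by exact_mod_cast key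
  nlinarith [key', hpos]
end
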